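/- Under the standing non-degeneracy hypotheses, the constant C(a) of the previous lemma satisfies the conjugation symmetry conj(C(a)) = (−1)^{a1+a2} · C(a) for every a = (a1,a2) ∈ ℤ², where C(a) := −(i/(2π))·Δ^{−1} · Σ_{ω=±} (β_{−ω}/β_ω) · exp(i p^ω·a) + ((1−a2)/(2π)) · J(a), with J(a) := ∫_{p1⁻}^{p1⁺+2π} exp(iθ a1) · (K1 + K2 exp(iθ))^{a2−2} · (−K3 exp(iθ) − K4)^{−a2} dθ if a2 ≤ 0, and J(a) := −∫_{p1⁺}^{p1⁻} exp(iθ a1) · (K1 + K2 exp(iθ))^{a2−2} · (−K3 exp(iθ) − K4)^{−a2} dθ if a2 ≥ 1. -/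

import Mathlib

open Complex Real MeasureTheory ComplexConjugate

/-- The characteristic polynomial of the non-interacting dimer model. -/
noncomputable def mu (t1 t2 t3 : ℝ) (k : ℝ × ℝ) : ℂ :=
  (t1 : ℂ) + Complex.I * (t2 : ℂ) * Complex.exp (Complex.I * (k.1 : ℂ))
    - (t3 : ℂ) * Complex.exp (Complex.I * ((k.1 : ℂ) + (k.2 : ℂ)))
    - Complex.I * Complex.exp (Complex.I * (k.2 : ℂ))

/-- The boundary integral `J(a)` appearing in the constant `C(a)`; here `K₁ = t₁`, `K₂ = i t₂`,
`K₃ = −t₃`, `K₄ = −i`, so `−K₃ e^{iθ} − K₄ = t₃ e^{iθ} + i`. -/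
noncomputable def Jint (t1 t2 t3 : ℝ) (p1plus p1minus : ℝ) (a : ℤ × ℤ) : ℂ :=
  if a.2 ≤ 0 then
    ∫ θ in p1minus..(p1plus + 2 * π),
      Complex.exp (Complex.I * (θ : ℂ) * (a.1 : ℂ))
        * ((t1 : ℂ) + Complex.I * (t2 : ℂ) * Complex.exp (Complex.I * (θ : ℂ))) ^ (a.2 - 2)
        * ((t3 : ℂ) * Complex.exp (Complex.I * (θ : ℂ)) + Complex.I) ^ (-a.2)
  else
    -∫ θ in p1plus..p1minus,
      Complex.exp (Complex.I * (θ : ℂ) * (a.1 : ℂ))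
        * ((t1 : ℂ) + Complex.I * (t2 : ℂ) * Complex.exp (Complex.I * (θ : ℂ))) ^ (a.2 - 2)
        * ((t3 : ℂ) * Complex.exp (Complex.I * (θ : ℂ)) + Complex.I) ^ (-a.2)

/-- The constant `C(a)`: `C(a) = −(i/(2π)) Δ⁻¹ Σ_ω (β₋ω/βω) e^{i pω·a} + ((1−a₂)/(2π)) J(a)`. -/
noncomputable def Cconst (t1 t2 t3 : ℝ) (pplus pminus : ℝ × ℝ) (αp αm βp βm : ℂ)
    (a : ℤ × ℤ) : ℂ :=
  -(Complex.I / (2 * π)) * (αp * βm - αm * βp)⁻¹ *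
      ((βm / βp) * Complex.exp (Complex.I * ((pplus.1 : ℂ) * (a.1 : ℂ) + (pplus.2 : ℂ) * (a.2 : ℂ)))
        + (βp / βm) * Complex.exp (Complex.I * ((pminus.1 : ℂ) * (a.1 : ℂ) + (pminus.2 : ℂ) * (a.2 : ℂ))))
    + (((1 - a.2 : ℤ) : ℂ) / (2 * π)) * Jint t1 t2 t3 pplus.1 pminus.1 a

/-- The set `2πℤ²` of lattice translations. -/
def twoPiLattice : Set (ℝ × ℝ) := {x | ∃ m n : ℤ, x = (2 * π * m, 2 * π * n)}

/-!
The reflection `k ↦ (π, π) - k` conjugates `μ`. Since it swaps `p⁺` and `p⁻`, it gives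
`α₋ = -conj α₊`, `β₋ = -conj β₊`, hence `conj Δ = -Δ`, and it turns `e^{i p⁺·a}` into
`(-1)^{a₁+a₂} conj e^{i p⁻·a}`. In `J(a)` the reflection `θ ↦ π - θ` conjugates the integrand up to
the same sign and maps each integration interval onto itself, modulo `2π` when `a₂ ≤ 0`.
-/

lemma exp_I_mul_ofReal_of_eq_int_mul_pi_sub (x y : ℝ) (n : ℤ) (h : y = n * π - x) :
    Complex.exp (I * y) = (-1) ^ n * conj (Complex.exp (I * x)) := by
  rw [← Complex.exp_conj, map_mul, conj_I, conj_ofReal, h, ← Complex.exp_pi_mul_I,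
    ← Complex.exp_int_mul, ← Complex.exp_add]
  congr 1
  push_cast
  ring

lemma mu_pi_sub (t1 t2 t3 : ℝ) (k : ℝ × ℝ) :
    mu t1 t2 t3 (π - k.1, π - k.2) = conj (mu t1 t2 t3 k) := by
  simp only [mu, ← ofReal_add]
  rw [exp_I_mul_ofReal_of_eq_int_mul_pi_sub k.1 (π - k.1) 1 (by push_cast; ring),
    exp_I_mul_ofReal_of_eq_int_mul_pi_sub k.2 (π - k.2) 1 (by push_cast; ring),
    exp_I_mul_ofReal_of_eq_int_mul_pi_sub (k.1 + k.2) (π - k.1 + (π - k.2)) 2 (by push_cast; ring)]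
  simp only [map_sub, map_add, map_mul, conj_I, conj_ofReal]
  norm_num

lemma deriv_conj_comp_const_sub (g : ℝ → ℂ) (c x : ℝ) :
    deriv (fun y => conj (g (c - y))) x = -conj (deriv g (c - x)) :=
  (deriv_comp_const_sub (f := fun z => conj (g z)) c x).trans (congrArg Neg.neg deriv.star)

lemma deriv_mu_fst_pi_sub (t1 t2 t3 : ℝ) (p : ℝ × ℝ) :
    deriv (fun x => mu t1 t2 t3 (x, π - p.2)) (π - p.1)
      = -conj (deriv (fun x => mu t1 t2 t3 (x, p.2)) p.1) := by
  have h : (fun x => mu t1 t2 t3 (x, π - p.2)) = fun x => conj (mu t1 t2 t3 (π - x, p.2)) := by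
    funext x
    simpa using mu_pi_sub t1 t2 t3 (π - x, p.2)
  rw [h, deriv_conj_comp_const_sub (fun x => mu t1 t2 t3 (x, p.2)), sub_sub_cancel]

lemma deriv_mu_snd_pi_sub (t1 t2 t3 : ℝ) (p : ℝ × ℝ) :
    deriv (fun y => mu t1 t2 t3 (π - p.1, y)) (π - p.2)
      = -conj (deriv (fun y => mu t1 t2 t3 (p.1, y)) p.2) := by
  have h : (fun y => mu t1 t2 t3 (π - p.1, y)) = fun y => conj (mu t1 t2 t3 (p.1, π - y)) := by
    funext y
    simpa using mu_pi_sub t1 t2 t3 (p.1, π - y)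
  rw [h, deriv_conj_comp_const_sub (fun y => mu t1 t2 t3 (p.1, y)), sub_sub_cancel]

noncomputable def Jintegrand (t1 t2 t3 : ℝ) (a : ℤ × ℤ) (θ : ℝ) : ℂ :=
  Complex.exp (I * (θ : ℂ) * (a.1 : ℂ))
    * ((t1 : ℂ) + I * (t2 : ℂ) * Complex.exp (I * (θ : ℂ))) ^ (a.2 - 2)
    * ((t3 : ℂ) * Complex.exp (I * (θ : ℂ)) + I) ^ (-a.2)

lemma Jint_eq_Jintegrand (t1 t2 t3 p q : ℝ) (a : ℤ × ℤ) :
    Jint t1 t2 t3 p q a = if a.2 ≤ 0 then ∫ θ in q..(p + 2 * π), Jintegrand t1 t2 t3 a θ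
      else -∫ θ in p..q, Jintegrand t1 t2 t3 a θ :=
  rfl

lemma Jintegrand_periodic (t1 t2 t3 : ℝ) (a : ℤ × ℤ) :
    Function.Periodic (Jintegrand t1 t2 t3 a) (2 * π) := by
  intro θ
  have h : ∀ n : ℤ, Complex.exp (I * ((θ + 2 * π : ℝ) : ℂ) * n) = Complex.exp (I * θ * n) := by
    intro n
    rw [show I * ((θ + 2 * π : ℝ) : ℂ) * n = I * θ * n + n * (2 * π * I) by push_cast; ring,
      Complex.exp_add, Complex.exp_int_mul_two_pi_mul_I, mul_one]
  have h1 := h 1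
  simp only [Int.cast_one, mul_one] at h1
  simp only [Jintegrand, h a.1, h1]

lemma conj_Jintegrand (t1 t2 t3 : ℝ) (a : ℤ × ℤ) (θ : ℝ) :
    conj (Jintegrand t1 t2 t3 a θ) = (-1) ^ (a.1 + a.2) * Jintegrand t1 t2 t3 a (π - θ) := by
  set e := Complex.exp (I * θ)
  have he : Complex.exp (I * ↑(π - θ)) = -conj e := by
    simpa using exp_I_mul_ofReal_of_eq_int_mul_pi_sub θ (π - θ) 1 (by push_cast; ring)
  have hplane :
      Complex.exp (I * ↑(π - θ) * a.1) = (-1) ^ a.1 * conj (Complex.exp (I * θ * a.1)) := by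
    simpa [mul_assoc] using
      exp_I_mul_ofReal_of_eq_int_mul_pi_sub (θ * a.1) ((π - θ) * a.1) a.1 (by ring)
  have hA : (t1 : ℂ) + I * t2 * -conj e = conj (t1 + I * t2 * e) := by
    simp only [map_add, map_mul, conj_ofReal, conj_I]
    ring
  have hB : (t3 : ℂ) * -conj e + I = -1 * conj (t3 * e + I) := by
    simp only [map_add, map_mul, conj_ofReal, conj_I]
    ring
  have hsign : (-1 : ℂ) ^ (a.1 + a.2) * (-1) ^ a.1 * (-1) ^ (-a.2) = 1 := by
    rw [← zpow_add₀ (by norm_num), ← zpow_add₀ (by norm_num)]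
    exact Even.neg_one_zpow ⟨a.1, by ring⟩
  simp only [Jintegrand, he, hplane, hA, hB, mul_zpow, map_mul, map_zpow₀]
  linear_combination (-(conj (Complex.exp (I * θ * a.1)) * conj (t1 + I * t2 * e) ^ (a.2 - 2)
    * conj (t3 * e + I) ^ (-a.2))) * hsign

lemma conj_intervalIntegral_of_conj_eq_mul_comp_sub {f : ℝ → ℂ} {s : ℂ} {c : ℝ}
    (hf : ∀ θ, conj (f θ) = s * f (c - θ)) (a b : ℝ) :
    conj (∫ θ in a..b, f θ) = s * ∫ θ in c - b..c - a, f θ := by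
  rw [← intervalIntegral.intervalIntegral_conj]
  simp only [hf, intervalIntegral.integral_const_mul, intervalIntegral.integral_comp_sub_left]

lemma conj_Jint (t1 t2 t3 p : ℝ) (a : ℤ × ℤ) :
    conj (Jint t1 t2 t3 p (π - p) a) = (-1) ^ (a.1 + a.2) * Jint t1 t2 t3 p (π - p) a := by
  have hconj := conj_intervalIntegral_of_conj_eq_mul_comp_sub (conj_Jintegrand t1 t2 t3 a)
  rw [Jint_eq_Jintegrand]
  split_ifs
  · have hshift := intervalIntegral.integral_comp_add_right (Jintegrand t1 t2 t3 a) (2 * π)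
      (a := π - (p + 2 * π)) (b := π - (π - p))
    rw [funext (Jintegrand_periodic t1 t2 t3 a)] at hshift
    rw [hconj, hshift]
    congr 2 <;> ring
  · rw [map_neg, hconj, sub_sub_cancel, mul_neg]

lemma exp_I_mul_pi_sub_dot (p : ℝ × ℝ) (a : ℤ × ℤ) :
    Complex.exp (I * (((π - p.1 : ℝ) : ℂ) * a.1 + ((π - p.2 : ℝ) : ℂ) * a.2))
      = (-1) ^ (a.1 + a.2) * conj (Complex.exp (I * ((p.1 : ℂ) * a.1 + (p.2 : ℂ) * a.2))) := by
  simpa using exp_I_mul_ofReal_of_eq_int_mul_pi_sub (p.1 * a.1 + p.2 * a.2)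
    ((π - p.1) * a.1 + (π - p.2) * a.2) (a.1 + a.2) (by push_cast; ring)

lemma conj_oscillatory_term (x : ℝ) {s αp αm βp βm Ep Em : ℂ} (hs : conj s = s)
    (hs2 : s * s = 1) (hα : αm = -conj αp) (hβ : βm = -conj βp) (hE : Em = s * conj Ep) :
    conj (-(I / (2 * x)) * (αp * βm - αm * βp)⁻¹ * (βm / βp * Ep + βp / βm * Em))
      = s * (-(I / (2 * x)) * (αp * βm - αm * βp)⁻¹ * (βm / βp * Ep + βp / βm * Em)) := by
  have hEp : conj Ep = s * Em := by rw [hE, ← mul_assoc, hs2, one_mul]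
  have hEm : conj Em = s * Ep := by rw [hE, map_mul, hs, conj_conj]
  subst hα hβ
  have hD : conj (αp * -conj βp - -conj αp * βp) = -(αp * -conj βp - -conj αp * βp) := by
    simp only [map_sub, map_mul, map_neg, conj_conj]
    ring
  simp only [map_mul, map_add, map_neg, map_div₀, map_inv₀, hD, conj_I, conj_ofReal, map_ofNat,
    conj_conj, hEp, hEm, inv_neg]
  ring

theorem Cconst_conj_symmetry_general (t1 t2 t3 : ℝ)
    (pplus : ℝ × ℝ)
    (pminus : ℝ × ℝ) (hpm : pminus = (π - pplus.1, π - pplus.2))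
    (αp αm βp βm : ℂ)
    (hαp : αp = deriv (fun x : ℝ => mu t1 t2 t3 (x, pplus.2)) pplus.1)
    (hβp : βp = deriv (fun y : ℝ => mu t1 t2 t3 (pplus.1, y)) pplus.2)
    (hαm : αm = deriv (fun x : ℝ => mu t1 t2 t3 (x, pminus.2)) pminus.1)
    (hβm : βm = deriv (fun y : ℝ => mu t1 t2 t3 (pminus.1, y)) pminus.2)
    (a : ℤ × ℤ) :
    conj (Cconst t1 t2 t3 pplus pminus αp αm βp βm a)
      = (-1 : ℂ) ^ (a.1 + a.2) * Cconst t1 t2 t3 pplus pminus αp αm βp βm a := by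
  subst hpm hαp hβp
  have hα : αm = -conj (deriv (fun x => mu t1 t2 t3 (x, pplus.2)) pplus.1) :=
    hαm.trans (deriv_mu_fst_pi_sub t1 t2 t3 pplus)
  have hβ : βm = -conj (deriv (fun y => mu t1 t2 t3 (pplus.1, y)) pplus.2) :=
    hβm.trans (deriv_mu_snd_pi_sub t1 t2 t3 pplus)
  have hs : conj ((-1 : ℂ) ^ (a.1 + a.2)) = (-1) ^ (a.1 + a.2) := by simp
  have hs2 : (-1 : ℂ) ^ (a.1 + a.2) * (-1) ^ (a.1 + a.2) = 1 := by
    rw [← zpow_add₀ (by norm_num)]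
    exact Even.neg_one_zpow ⟨_, rfl⟩
  rw [Cconst, map_add, conj_oscillatory_term π hs hs2 hα hβ (exp_I_mul_pi_sub_dot pplus a),
    map_mul, conj_Jint]
  simp only [map_div₀, map_intCast, map_mul, map_ofNat, conj_ofReal]
  ring

/-- Conjugation symmetry of the constant `C(a)`: `conj (C(a)) = (−1)^{a₁+a₂} C(a)`. -/
theorem Cconst_conj_symmetry (t1 t2 t3 : ℝ) (ht1 : 0 < t1) (ht2 : 0 < t2) (ht3 : 0 < t3)
    (h12 : t1 ≠ t2) (h31 : t3 ≠ 1)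
    (pplus : ℝ × ℝ) (hzero : mu t1 t2 t3 pplus = 0) (hcos : 0 < Real.cos pplus.1)
    (pminus : ℝ × ℝ) (hpm : pminus = (π - pplus.1, π - pplus.2))
    (hzeros : ∀ k : ℝ × ℝ, mu t1 t2 t3 k = 0 ↔
      ((∃ x ∈ twoPiLattice, k = pplus + x) ∨ (∃ x ∈ twoPiLattice, k = pminus + x)))
    (hlow : ∃ c > 0, ∀ k : ℝ × ℝ,
      c * min (Metric.infDist (k - pplus) twoPiLattice)
              (Metric.infDist (k - pminus) twoPiLattice)
        ≤ ‖mu t1 t2 t3 k‖)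
    (αp αm βp βm : ℂ)
    (hαp : αp = deriv (fun x : ℝ => mu t1 t2 t3 (x, pplus.2)) pplus.1)
    (hβp : βp = deriv (fun y : ℝ => mu t1 t2 t3 (pplus.1, y)) pplus.2)
    (hαm : αm = deriv (fun x : ℝ => mu t1 t2 t3 (x, pminus.2)) pminus.1)
    (hβm : βm = deriv (fun y : ℝ => mu t1 t2 t3 (pminus.1, y)) pminus.2)
    (hbp : βp ≠ 0) (hbm : βm ≠ 0) (hΔ : αp * βm - αm * βp ≠ 0)
    (a : ℤ × ℤ) :
    conj (Cconst t1 t2 t3 pplus pminus αp αm βp βm a)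
      = (-1 : ℂ) ^ (a.1 + a.2) * Cconst t1 t2 t3 pplus pminus αp αm βp βm a :=
  Cconst_conj_symmetry_general t1 t2 t3 pplus pminus hpm αp αm βp βm hαp hβp hαm hβm a
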